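/- arXiv:1211.3395 — 2 statements merged into one kernel-verified Lean document; each statement's English description precedes it below -/
import Mathlib

section
/- Let Ω ⊂ ℝ² be a bounded convex domain with smooth boundary and let H ⊂ int(Ω) be a smooth closed curve with unit-speed parametrization q and unit tangent T_H. For s on ∂Ω (parametrized by r) and t on H, let ω(s,t) = (q(t) − r(s))/|q(t) − r(s)| be the unit relative displacement vector. If ∂_s⟨ω(s,t), T_H(t)⟩ = 0 at some (s,t), then |⟨T_H(t), ω(s,t)⟩| = 1. -/
/-!
Write `v = r'(s)` and `u = q(t) - r(s)`, so `ω = u / ‖u‖`. Differentiating,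
`∂ₛ⟨ω, T_H⟩ = -‖u‖⁻¹ ⟨v - ⟨ω, v⟩ ω, T_H⟩`, so at a critical point `T_H` is orthogonal to
`p = v - ⟨ω, v⟩ ω`, as is `ω`. A functional supporting the convex domain at `r(s)` vanishes on
the tangent `v` but not on `u`, so `v` is not parallel to `ω` and `p ≠ 0`. In the plane, two
vectors orthogonal to the same nonzero vector are parallel, hence `|⟨T_H, ω⟩| = 1`.
-/

open Real

local notation "E2" => EuclideanSpace ℝ (Fin 2)

open Module
open scoped RealInnerProductSpace

section
variable {E : Type*} [NormedAddCommGroup E] [InnerProductSpace ℝ E]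

theorem HasDerivAt.norm_of_ne_zero {f : ℝ → E} {f' : E} {x : ℝ} (hf : HasDerivAt f f' x)
    (h0 : f x ≠ 0) : HasDerivAt (‖f ·‖) (⟪f x, f'⟫ / ‖f x‖) x := by
  have h := hf.norm_sq.sqrt (pow_ne_zero 2 (norm_ne_zero_iff.2 h0))
  simp only [Real.sqrt_sq (norm_nonneg _)] at h
  convert h using 1
  ring

theorem HasDerivAt.inv_norm_smul {f : ℝ → E} {f' : E} {x : ℝ} (hf : HasDerivAt f f' x)
    (h0 : f x ≠ 0) :
    HasDerivAt (fun y => ‖f y‖⁻¹ • f y)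
      (‖f x‖⁻¹ • (f' - ⟪‖f x‖⁻¹ • f x, f'⟫ • ‖f x‖⁻¹ • f x)) x := by
  have hinv : HasDerivAt (fun y => ‖f y‖⁻¹) _ x :=
    (hf.norm_of_ne_zero h0).inv (norm_ne_zero_iff.2 h0)
  refine (hinv.smul hf).congr_deriv ?_
  rw [real_inner_smul_left]
  module

theorem sub_inner_smul_ne_zero_of_map_eq_zero {φ : E →L[ℝ] ℝ} {v w : E} (hv : v ≠ 0)
    (hφv : φ v = 0) (hφw : φ w ≠ 0) : v - ⟪w, v⟫ • w ≠ 0 := by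
  intro h
  have hφvw : ⟪w, v⟫ * φ w = 0 := by rw [← smul_eq_mul, ← map_smul, ← sub_eq_zero.1 h, hφv]
  rw [sub_eq_zero.1 h, (mul_eq_zero.1 hφvw).resolve_right hφw, zero_smul] at hv
  exact hv rfl

theorem abs_real_inner_eq_norm_mul_norm_of_inner_eq_zero (hE : finrank ℝ E = 2) {p w T : E}
    (hp : p ≠ 0) (hw : ⟪p, w⟫ = 0) (hT : ⟪p, T⟫ = 0) : |⟪T, w⟫| = ‖T‖ * ‖w‖ := by
  rcases eq_or_ne w 0 with rfl | hw0
  · simp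
  have : Fact (finrank ℝ E = 1 + 1) := ⟨hE⟩
  have hw' : w ∈ (ℝ ∙ p)ᗮ := Submodule.mem_orthogonal_singleton_iff_inner_right.2 hw
  have hT' : T ∈ (ℝ ∙ p)ᗮ := Submodule.mem_orthogonal_singleton_iff_inner_right.2 hT
  obtain ⟨c, hc⟩ := (finrank_eq_one_iff_of_nonzero' (⟨w, hw'⟩ : (ℝ ∙ p)ᗮ)
    (by simpa using hw0)).1 (Submodule.finrank_orthogonal_span_singleton hp) ⟨T, hT'⟩
  obtain rfl : c • w = T := congrArg Subtype.val hc
  rw [real_inner_smul_left, real_inner_self_eq_norm_sq, norm_smul, Real.norm_eq_abs, abs_mul,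
    abs_sq]
  ring

theorem Convex.exists_supporting_clm_map_deriv_eq_zero {Ω : Set E} (hconv : Convex ℝ Ω)
    (hopen : IsOpen Ω) {r : ℝ → E} {v : E} {s : ℝ} (hr : HasDerivAt r v s)
    (hrbd : ∀ x, r x ∈ frontier Ω) : ∃ φ : E →L[ℝ] ℝ, φ v = 0 ∧ ∀ p ∈ Ω, φ p < φ (r s) := by
  have hrs : r s ∉ Ω := by simpa [hopen.interior_eq] using (hrbd s).2
  obtain ⟨φ, hφ⟩ := geometric_hahn_banach_open_point hconv hopen hrs
  have hmax : IsLocalMax (φ ∘ r) s := Filter.Eventually.of_forall fun x =>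
    closure_minimal (fun p hp => (hφ p hp).le) (isClosed_le φ.continuous continuous_const)
      (frontier_subset_closure (hrbd x))
  exact ⟨φ, hmax.hasDerivAt_eq_zero (φ.hasFDerivAt.comp_hasDerivAt s hr), hφ⟩

end

theorem stmt_8_general (Ω : Set E2) (hconv : Convex ℝ Ω)
    (hopen : IsOpen Ω)
    (r q : ℝ → E2)
    (hr : Differentiable ℝ r)
    (hrbd : ∀ s, r s ∈ frontier Ω) (hqin : ∀ t, q t ∈ Ω)
    (hrunit : ∀ s, ‖deriv r s‖ = 1) (hqunit : ∀ t, ‖deriv q t‖ = 1)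
    (ω : ℝ → ℝ → E2)
    (hω : ∀ s t, ω s t = ‖q t - r s‖⁻¹ • (q t - r s))
    (s t : ℝ)
    (hcrit : deriv (fun s' => (inner ℝ (ω s' t) (deriv q t) : ℝ)) s = 0) :
    |(inner ℝ (deriv q t) (ω s t) : ℝ)| = 1 := by
  set v := deriv r s
  set w := ω s t with hw_def
  set p := v - ⟪w, v⟫ • w
  obtain ⟨φ, hφv, hφ⟩ :=
    hconv.exists_supporting_clm_map_deriv_eq_zero hopen (hr s).hasDerivAt hrbd
  have hu : q t - r s ≠ 0 := sub_ne_zero.2 fun h => (hφ _ (hqin t)).ne (by rw [h])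
  have hw : ‖w‖ = 1 := by rw [hw_def, hω]; exact norm_smul_inv_norm (𝕜 := ℝ) hu
  have hdω : HasDerivAt (fun s' => ω s' t) (-(‖q t - r s‖⁻¹ • p)) s := by
    have h := ((hr s).hasDerivAt.const_sub (q t)).inv_norm_smul hu
    simp only [← hω] at h
    refine h.congr_deriv ?_
    rw [inner_neg_right]
    module
  have hpT : ⟪p, deriv q t⟫ = 0 := by
    rw [(hdω.inner ℝ (hasDerivAt_const s (deriv q t))).deriv] at hcrit
    simpa [inner_neg_left, real_inner_smul_left, hu] using hcrit
  have hpw : ⟪p, w⟫ = 0 := by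
    rw [inner_sub_left, real_inner_smul_left, real_inner_self_eq_norm_sq, hw, real_inner_comm]
    ring
  have hφw : φ w < 0 := by
    rw [hw_def, hω, map_smul, map_sub, smul_eq_mul]
    exact mul_neg_of_pos_of_neg (by positivity) (by linarith [hφ _ (hqin t)])
  have hp : p ≠ 0 :=
    sub_inner_smul_ne_zero_of_map_eq_zero (norm_ne_zero_iff.1 (by simp [v, hrunit])) hφv hφw.ne
  rw [abs_real_inner_eq_norm_mul_norm_of_inner_eq_zero finrank_euclideanSpace_fin hp hpw hpT,
    hqunit, hw, one_mul]

/-- If `Ω ⊂ ℝ²` is a bounded convex open domain with boundary curve `r`, `H` is a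
smooth closed curve inside `Ω` with unit-speed parametrization `q`, and
`ω(s,t) = (q(t) − r(s))/|q(t) − r(s)|`, then at any critical point in `s` of
`s ↦ ⟨ω(s,t), T_H(t)⟩` one has `|⟨T_H(t), ω(s,t)⟩| = 1`. -/
theorem stmt_8 (Ω : Set E2) (hconv : Convex ℝ Ω)
    (hopen : IsOpen Ω) (hbdd : Bornology.IsBounded Ω)
    (r q : ℝ → E2)
    (hr : Differentiable ℝ r) (hq : Differentiable ℝ q)
    (hrbd : ∀ s, r s ∈ frontier Ω) (hqin : ∀ t, q t ∈ Ω)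
    (hrunit : ∀ s, ‖deriv r s‖ = 1) (hqunit : ∀ t, ‖deriv q t‖ = 1)
    (ω : ℝ → ℝ → E2)
    (hω : ∀ s t, ω s t = ‖q t - r s‖⁻¹ • (q t - r s))
    (s t : ℝ)
    (hcrit : deriv (fun s' => (inner ℝ (ω s' t) (deriv q t) : ℝ)) s = 0) :
    |(inner ℝ (deriv q t) (ω s t) : ℝ)| = 1 :=
  stmt_8_general Ω hconv hopen r q hr hrbd hqin hrunit hqunit ω hω s t hcrit
end

section
/- Let q : ℝ → ℝ² be real-analytic and unit-speed with curvature κ_H, let r(s) ∈ ℝ² with q(a) ≠ r(s), and let ρ^ℂ(t, s) = √(⟨q^ℂ(t) − r(s), q^ℂ(t)* − r(s)̄⟩) be the holomorphic extension of the distance function in t (principal branch). Suppose Y(s) satisfies the glancing conditions ⟨ω(s,Y(s)), T_H(Y(s))⟩ = −1 and ⟨ω(s,Y(s)), ν_H(Y(s))⟩ = 0. Then, for complex t near Y(s), ρ^ℂ(t,s) = |q(Y(s)) − r(s)| − (t − Y(s)) + (1/6)κ_H²(Y(s))(t − Y(s))³ + O(|t − Y(s)|⁴). -/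
/-!
The complexified squared distance `f(z) = ⟨q^ℂ(z) - r, q^ℂ(z) - r⟩` is holomorphic near the real
axis, and its derivatives at real points are those of `x ↦ ‖q x - r‖²`. At a glancing point
`q Y - r = -d T(Y)` with `d = ‖q Y - r‖`, and `|T| = 1` gives `⟨T, T'⟩ = 0` and
`⟨T, T''⟩ = -‖T'‖² = -κ²`, so the first four Taylor coefficients of `f` at `Y` are
`d², -2d, 1, dκ²/3`, i.e. `f(Y + w) = (d - w)² + dκ²w³/3 + O(w⁴)`. The existence of `T''` comes
from analyticity: `T'` is the real restriction of `(q^ℂ)''`. Finally `ρ^ℂ² = f` and `ρ^ℂ → d ≠ 0`,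
so `ρ^ℂ - P = (ρ^ℂ² - P²) / (ρ^ℂ + P)` for the cubic `P = d - w + κ²w³/6`, whose square agrees
with `f` up to `O(w⁴)`.
-/

open Real Asymptotics

local notation "E2" => EuclideanSpace ℝ (Fin 2)

open Filter Topology
open scoped InnerProductSpace Nat

section UnitTangent

variable {E : Type*} [NormedAddCommGroup E] [InnerProductSpace ℝ E] {T N : ℝ → E}

theorem inner_eq_zero_of_hasDerivAt_of_norm_eq_one (hT : ∀ t, HasDerivAt T (N t) t)
    (hunit : ∀ t, ‖T t‖ = 1) (t : ℝ) : ⟪T t, N t⟫_ℝ = 0 := by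
  have hconst : (fun s => ⟪T s, T s⟫_ℝ) = fun _ => 1 := by
    ext s; rw [real_inner_self_eq_norm_sq, hunit, one_pow]
  have h := (hT t).inner ℝ (hT t)
  rw [hconst] at h
  have := h.unique (hasDerivAt_const t 1)
  rw [real_inner_comm (T t)] at this
  linarith

theorem inner_eq_neg_norm_sq_of_hasDerivAt_of_norm_eq_one (hT : ∀ t, HasDerivAt T (N t) t)
    (hunit : ∀ t, ‖T t‖ = 1) {t : ℝ} {N' : E} (hN : HasDerivAt N N' t) :
    ⟪T t, N'⟫_ℝ = -‖N t‖ ^ 2 := by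
  have hzero : (fun s => ⟪T s, N s⟫_ℝ) = fun _ => 0 :=
    funext (inner_eq_zero_of_hasDerivAt_of_norm_eq_one hT hunit)
  have h := (hT t).inner ℝ hN
  rw [hzero] at h
  have := h.unique (hasDerivAt_const t 0)
  rw [real_inner_self_eq_norm_sq] at this
  linarith

end UnitTangent

theorem AnalyticAt.isBigO_sub_sum_iteratedDeriv {𝕜 F : Type*} [NontriviallyNormedField 𝕜]
    [CharZero 𝕜] [NormedAddCommGroup F] [NormedSpace 𝕜 F] [CompleteSpace F] {f : 𝕜 → F} {x : 𝕜}
    (hf : AnalyticAt 𝕜 f x) (n : ℕ) :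
    (fun y => f (x + y) - ∑ k ∈ Finset.range n, ((k ! : 𝕜)⁻¹ * y ^ k) • iteratedDeriv k f x)
      =O[𝓝 0] fun y => ‖y‖ ^ n := by
  obtain ⟨p, r, hp⟩ := hf
  refine (hp.hasFPowerSeriesAt.isBigO_sub_partialSum_pow n).congr_left fun y => ?_
  congr 1
  refine Finset.sum_congr rfl fun k _ => ?_
  have h := hp.factorial_smul y k
  rw [iteratedFDeriv_apply_eq_iteratedDeriv_mul_prod, Finset.prod_const, Finset.card_univ,
    Fintype.card_fin] at h
  rw [mul_smul, ← h, ← Nat.cast_smul_eq_nsmul 𝕜, smul_smul,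
    inv_mul_cancel₀ (Nat.cast_ne_zero.2 k.factorial_ne_zero), one_smul]

section RealRestriction

theorem deriv_eq_of_ofReal_eq {F : ℂ → ℂ} {u : ℝ → ℝ} {u' : ℝ} {x : ℝ}
    (hF : DifferentiableAt ℂ F x) (hu : HasDerivAt u u' x) (h : ∀ y : ℝ, F y = u y) :
    deriv F x = u' := by
  have hFu : (fun y : ℝ => F y) = fun y => (u y : ℂ) := funext h
  have := hF.hasDerivAt.comp_ofReal
  rw [hFu] at this
  exact this.unique hu.ofReal_comp

theorem hasDerivAt_of_ofReal_eq {F : ℂ → ℂ} {u : ℝ → ℝ} {x : ℝ}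
    (hF : DifferentiableAt ℂ F x) (h : ∀ y : ℝ, F y = u y) :
    HasDerivAt u (deriv F x).re x := by
  have hu : u = fun y : ℝ => (F y).re := funext fun y => by rw [h, Complex.ofReal_re]
  rw [hu]
  exact Complex.reCLM.hasFDerivAt.comp_hasDerivAt x hF.hasDerivAt.comp_ofReal

variable {F : ℂ → ℂ} {u₀ u₁ u₂ : ℝ → ℝ} (hF : ∀ x : ℝ, AnalyticAt ℂ F x)
  (h₀ : ∀ x : ℝ, F x = u₀ x) (h₁ : ∀ x, HasDerivAt u₀ (u₁ x) x)
  (h₂ : ∀ x, HasDerivAt u₁ (u₂ x) x)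
include hF h₀ h₁ h₂

theorem deriv_deriv_eq_of_ofReal_eq (x : ℝ) : deriv (deriv F) x = u₂ x :=
  deriv_eq_of_ofReal_eq (hF x).deriv.differentiableAt (h₂ x)
    fun y => deriv_eq_of_ofReal_eq (hF y).differentiableAt (h₁ y) h₀

theorem differentiableAt_of_analyticAt_ofReal (x : ℝ) : DifferentiableAt ℝ u₂ x :=
  (hasDerivAt_of_ofReal_eq (hF x).deriv.deriv.differentiableAt
    (deriv_deriv_eq_of_ofReal_eq hF h₀ h₁ h₂)).differentiableAt

theorem isBigO_sub_cubic_of_ofReal_eq {Y c : ℝ} (h₃ : HasDerivAt u₂ c Y) :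
    (fun w : ℂ => F (Y + w) - (u₀ Y + u₁ Y * w + u₂ Y / 2 * w ^ 2 + c / 6 * w ^ 3))
      =O[𝓝 0] fun w => ‖w‖ ^ 4 := by
  have d₁ : deriv F Y = u₁ Y := deriv_eq_of_ofReal_eq (hF Y).differentiableAt (h₁ Y) h₀
  have d₂ := deriv_deriv_eq_of_ofReal_eq hF h₀ h₁ h₂
  have d₃ : deriv (deriv (deriv F)) Y = c :=
    deriv_eq_of_ofReal_eq (hF Y).deriv.deriv.differentiableAt h₃ d₂
  refine ((hF Y).isBigO_sub_sum_iteratedDeriv 4).congr_left fun w => ?_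
  simp only [Finset.sum_range_succ, Finset.range_zero, Finset.sum_empty, iteratedDeriv_eq_iterate,
    Function.iterate_succ_apply', Function.iterate_zero_apply, h₀, d₁, d₂, d₃, smul_eq_mul,
    Nat.factorial]
  push_cast
  ring

end RealRestriction

section SquaredDistance

variable {E : Type*} [NormedAddCommGroup E] [InnerProductSpace ℝ E]

theorem eq_neg_norm_smul_of_inner_eq_neg_one {u v : E} (hu : ‖u‖ = 1) (hv : v ≠ 0)
    (h : ⟪u, ‖v‖⁻¹ • v⟫_ℝ = -1) : v = -‖v‖ • u := by
  have hv' : ‖v‖ ≠ 0 := norm_ne_zero_iff.2 hv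
  have hunit : ‖‖v‖⁻¹ • v‖ = 1 := by rw [norm_smul, norm_inv, norm_norm, inv_mul_cancel₀ hv']
  rw [(inner_eq_neg_one_iff_of_norm_eq_one hu hunit).1 h, smul_neg, neg_smul, neg_neg, smul_smul,
    mul_inv_cancel₀ hv', one_smul]

theorem isBigO_sq_dist_sub_cubic_of_glancing {q T N : ℝ → E} {r N' : E} {Y : ℝ} {F : ℂ → ℂ}
    (hF : ∀ x : ℝ, AnalyticAt ℂ F x) (hFq : ∀ x : ℝ, F x = (‖q x - r‖ ^ 2 : ℝ))
    (hq : ∀ t, HasDerivAt q (T t) t) (hT : ∀ t, HasDerivAt T (N t) t)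
    (hunit : ∀ t, ‖T t‖ = 1) (hN : HasDerivAt N N' Y) (hne : q Y ≠ r)
    (hglance : ⟪T Y, ‖q Y - r‖⁻¹ • (q Y - r)⟫_ℝ = -1) :
    (fun w : ℂ => F (Y + w) - ((‖q Y - r‖ - w) ^ 2 + ‖q Y - r‖ * ‖N Y‖ ^ 2 / 3 * w ^ 3))
      =O[𝓝 0] fun w => ‖w‖ ^ 4 := by
  have h₃ : HasDerivAt (fun x => 2 * (⟪q x - r, N x⟫_ℝ + ⟪T x, T x⟫_ℝ))
      (2 * ((⟪q Y - r, N'⟫_ℝ + ⟪T Y, N Y⟫_ℝ) + (⟪T Y, N Y⟫_ℝ + ⟪N Y, T Y⟫_ℝ))) Y :=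
    ((((hq Y).sub_const r).inner ℝ hN).add ((hT Y).inner ℝ (hT Y))).const_mul 2
  have h := isBigO_sub_cubic_of_ofReal_eq (u₁ := fun x => 2 * ⟪q x - r, T x⟫_ℝ)
    (u₂ := fun x => 2 * (⟪q x - r, N x⟫_ℝ + ⟪T x, T x⟫_ℝ)) hF hFq
    (fun x => ((hq x).sub_const r).norm_sq)
    (fun x => (((hq x).sub_const r).inner ℝ (hT x)).const_mul 2) h₃
  have hqr := eq_neg_norm_smul_of_inner_eq_neg_one (hunit Y) (sub_ne_zero.2 hne) hglance
  have hTT : ⟪T Y, T Y⟫_ℝ = 1 := by rw [real_inner_self_eq_norm_sq, hunit, one_pow]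
  have hTN := inner_eq_zero_of_hasDerivAt_of_norm_eq_one hT hunit Y
  have hTN' := inner_eq_neg_norm_sq_of_hasDerivAt_of_norm_eq_one hT hunit hN
  set d := ‖q Y - r‖
  refine h.congr_left fun w => ?_
  simp only [hqr, real_inner_smul_left, real_inner_comm (T Y) (N Y), hTT, hTN, hTN']
  push_cast
  ring

end SquaredDistance

theorem isBigO_sub_of_sq_sub_sq {α 𝕜 : Type*} [NormedField 𝕜] {l : Filter α} {g P : α → 𝕜}
    {a b : 𝕜} (hg : Tendsto g l (𝓝 a)) (hP : Tendsto P l (𝓝 b)) (hab : a + b ≠ 0) :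
    (fun x => g x - P x) =O[l] fun x => g x ^ 2 - P x ^ 2 := by
  have hsum := hg.add hP
  have hinv : (fun x => (g x + P x)⁻¹) =O[l] fun _ => (1 : 𝕜) := (hsum.inv₀ hab).isBigO_one 𝕜
  refine (hinv.mul (isBigO_refl (fun x => g x ^ 2 - P x ^ 2) l)).congr' ?_ (by simp)
  filter_upwards [hsum.eventually_ne hab] with x hx
  field_simp
  ring

theorem isBigO_cpow_half_sub_cubic {F : ℂ → ℂ} {d : ℝ} (hd : 0 < d) {c : ℂ}
    (hF : (fun w => F w - ((d - w) ^ 2 + d * c / 3 * w ^ 3)) =O[𝓝 0] fun w => ‖w‖ ^ 4) :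
    (fun w => F w ^ (1 / 2 : ℂ) - (d - w + c / 6 * w ^ 3)) =O[𝓝 0] fun w => ‖w‖ ^ 4 := by
  have hpoly : Tendsto (fun w : ℂ => (d - w) ^ 2 + d * c / 3 * w ^ 3) (𝓝 0) (𝓝 ((d : ℂ) ^ 2)) :=
    Continuous.tendsto' (by fun_prop) 0 _ (by simp)
  have hFt : Tendsto F (𝓝 0) (𝓝 ((d : ℂ) ^ 2)) := by
    simpa using (hF.trans_tendsto (by simpa using tendsto_norm_zero.pow 4)).add hpoly
  have hdre : 0 < (d : ℂ).re := by simpa using hd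
  have hsqrt : Tendsto (fun w => F w ^ (1 / 2 : ℂ)) (𝓝 0) (𝓝 (d : ℂ)) := by
    have hslit : (d : ℂ) ^ 2 ∈ Complex.slitPlane := by
      rw [← Complex.ofReal_pow]; exact Complex.ofReal_mem_slitPlane.2 (by positivity)
    have := (continuousAt_cpow_const (b := (1 / 2 : ℂ)) hslit).tendsto.comp hFt
    rw [one_div, Complex.sq_cpow_two_inv hdre] at this
    rw [one_div]
    exact this
  have hP : Tendsto (fun w : ℂ => d - w + c / 6 * w ^ 3) (𝓝 0) (𝓝 (d : ℂ)) :=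
    Continuous.tendsto' (by fun_prop) 0 _ (by simp)
  -- `(d - w + c w³/6)² = (d - w)² + d c w³/3 - (c/3 - c² w²/36) w⁴`
  have hquartic : (fun w : ℂ => (c / 3 - c ^ 2 / 36 * w ^ 2) * w ^ 4) =O[𝓝 0]
      fun w => ‖w‖ ^ 4 := by
    have hbdd : Tendsto (fun w : ℂ => c / 3 - c ^ 2 / 36 * w ^ 2) (𝓝 0) (𝓝 (c / 3)) :=
      Continuous.tendsto' (by fun_prop) 0 _ (by simp)
    exact ((hbdd.isBigO_one ℝ).mul (isBigO_norm_right.2 (isBigO_refl _ _))).congr_right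
      fun w => by rw [one_mul, norm_pow]
  refine (isBigO_sub_of_sq_sub_sq hsqrt hP (by simpa using hdre.ne')).trans
    ((hF.add hquartic).congr_left fun w => ?_)
  rw [one_div, Complex.cpow_ofNat_inv_pow]
  ring

theorem setOf_abs_im_lt_mem_nhds {ε : ℝ} (hε : 0 < ε) (x : ℝ) :
    {z : ℂ | |z.im| < ε} ∈ 𝓝 (x : ℂ) :=
  (isOpen_lt (continuous_abs.comp Complex.continuous_im) continuous_const).mem_nhds
    (by simpa using hε)

theorem stmt_13_general (ε₀ : ℝ) (hε₀ : 0 < ε₀)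
    (q T ν : ℝ → E2) (κ : ℝ → ℝ) (qC : ℂ → Fin 2 → ℂ) (ρC : ℂ → ℂ)
    (hT : ∀ t, HasDerivAt q (T t) t)
    (hFrenetT : ∀ t, HasDerivAt T (κ t • ν t) t)
    (hTunit : ∀ t, ‖T t‖ = 1) (hνunit : ∀ t, ‖ν t‖ = 1)
    (hqC : ∀ i, DifferentiableOn ℂ (fun z => qC z i) {z : ℂ | |z.im| < ε₀})
    (hreal : ∀ x : ℝ, ∀ i, qC (x : ℂ) i = ((q x) i : ℂ))
    (rs : E2) (Y : ℝ) (hne : q Y ≠ rs)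
    (hρ : ∀ z : ℂ, |z.im| < ε₀ →
      ρC z = ((qC z 0 - (rs 0 : ℂ)) ^ 2 + (qC z 1 - (rs 1 : ℂ)) ^ 2) ^ ((1 : ℂ) / 2))
    (hglanceT : (inner ℝ (T Y) (‖q Y - rs‖⁻¹ • (q Y - rs)) : ℝ) = -1) :
    (fun w : ℂ => ρC ((Y : ℂ) + w) -
        ((‖q Y - rs‖ : ℂ) - w + (1 / 6 : ℂ) * (κ Y : ℂ) ^ 2 * w ^ 3))
      =O[nhds 0] fun w : ℂ => ‖w‖ ^ 4 := by
  set N : ℝ → E2 := fun t => κ t • ν t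
  have hA : ∀ i (x : ℝ), AnalyticAt ℂ (fun z => qC z i) x := fun i x =>
    (hqC i).analyticAt (setOf_abs_im_lt_mem_nhds hε₀ x)
  have hN : DifferentiableAt ℝ N Y := differentiableAt_euclidean.2 fun i =>
    differentiableAt_of_analyticAt_ofReal (hA i) (fun x => hreal x i)
      (fun t => (EuclideanSpace.proj (𝕜 := ℝ) i).hasFDerivAt.comp_hasDerivAt t (hT t))
      (fun t => (EuclideanSpace.proj (𝕜 := ℝ) i).hasFDerivAt.comp_hasDerivAt t (hFrenetT t)) Y
  have hNY : (‖N Y‖ : ℂ) ^ 2 = (κ Y : ℂ) ^ 2 := by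
    rw [norm_smul, hνunit, mul_one, Real.norm_eq_abs, ← Complex.ofReal_pow, sq_abs,
      Complex.ofReal_pow]
  have hf := isBigO_sq_dist_sub_cubic_of_glancing
    (F := fun z => (qC z 0 - (rs 0 : ℂ)) ^ 2 + (qC z 1 - (rs 1 : ℂ)) ^ 2)
    (fun x => (((hA 0 x).sub analyticAt_const).pow 2).add (((hA 1 x).sub analyticAt_const).pow 2))
    (fun x => by
      simp only [hreal, EuclideanSpace.norm_sq_eq, Fin.sum_univ_two, PiLp.sub_apply,
        Real.norm_eq_abs, sq_abs]
      push_cast; ring)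
    hT hFrenetT hTunit hN.hasDerivAt hne hglanceT
  rw [hNY] at hf
  have hmem : ∀ᶠ w : ℂ in 𝓝 0, |((Y : ℂ) + w).im| < ε₀ :=
    (Continuous.tendsto' (by fun_prop) 0 (Y : ℂ) (by simp)).eventually_mem
      (setOf_abs_im_lt_mem_nhds hε₀ Y)
  refine (isBigO_cpow_half_sub_cubic (norm_pos_iff.2 (sub_ne_zero.2 hne)) hf).congr' ?_ .rfl
  filter_upwards [hmem] with w hw
  rw [hρ _ hw]
  ring

/-- Expansion of the complexified distance function around a glancing point: if
`Y` satisfies `⟨ω(s,Y), T_H(Y)⟩ = −1` and `⟨ω(s,Y), ν_H(Y)⟩ = 0` for the point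
`rs = r(s)`, then the holomorphic continuation
`ρ^ℂ(t) = ((q^ℂ(t)₀ − rs₀)² + (q^ℂ(t)₁ − rs₁)²)^{1/2}` satisfies
`ρ^ℂ(Y + w) = |q(Y) − rs| − w + (1/6)κ(Y)² w³ + O(|w|⁴)` as `w → 0` in `ℂ`. -/
theorem stmt_13 (ε₀ : ℝ) (hε₀ : 0 < ε₀)
    (q T ν : ℝ → E2) (κ : ℝ → ℝ) (qC : ℂ → Fin 2 → ℂ) (ρC : ℂ → ℂ)
    (hT : ∀ t, HasDerivAt q (T t) t)
    (hFrenetT : ∀ t, HasDerivAt T (κ t • ν t) t)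
    (hFrenetν : ∀ t, HasDerivAt ν (-(κ t) • T t) t)
    (hTunit : ∀ t, ‖T t‖ = 1) (hνunit : ∀ t, ‖ν t‖ = 1)
    (hqC : ∀ i, DifferentiableOn ℂ (fun z => qC z i) {z : ℂ | |z.im| < ε₀})
    (hreal : ∀ x : ℝ, ∀ i, qC (x : ℂ) i = ((q x) i : ℂ))
    (rs : E2) (Y : ℝ) (hne : q Y ≠ rs)
    (hρ : ∀ z : ℂ, |z.im| < ε₀ →
      ρC z = ((qC z 0 - (rs 0 : ℂ)) ^ 2 + (qC z 1 - (rs 1 : ℂ)) ^ 2) ^ ((1 : ℂ) / 2))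
    (hglanceT : (inner ℝ (T Y) (‖q Y - rs‖⁻¹ • (q Y - rs)) : ℝ) = -1)
    (hglanceν : (inner ℝ (ν Y) (‖q Y - rs‖⁻¹ • (q Y - rs)) : ℝ) = 0) :
    (fun w : ℂ => ρC ((Y : ℂ) + w) -
        ((‖q Y - rs‖ : ℂ) - w + (1 / 6 : ℂ) * (κ Y : ℂ) ^ 2 * w ^ 3))
      =O[nhds 0] fun w : ℂ => ‖w‖ ^ 4 :=
  stmt_13_general ε₀ hε₀ q T ν κ qC ρC hT hFrenetT hTunit hνunit hqC hreal rs Y hne hρ hglanceT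
end
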